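/- arXiv:1902.06941 — 4 statements merged into one kernel-verified Lean document; each statement's English description precedes it below -/
import Mathlib

section
/- Let X be a real-valued random variable with continuous distribution function, α ∈ (0,1), and U : ℝ → ℝ increasing and continuous such that Assumption (A) holds. Then the events {X ≥ VaR_α(X)} and {U(X) ≥ VaR_α(U(X))} are equal. -/
open MeasureTheory Real Set

/-- Value at Risk at level `α`: `VaR_α(X) = inf {x | F_X(x) ≥ α}`. -/
noncomputable def VaR {Ω : Type*} [MeasurableSpace Ω] (P : Measure Ω) (X : Ω → ℝ) (α : ℝ) : ℝ :=
  sInf {x : ℝ | α ≤ (P {ω | X ω ≤ x}).toReal}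

/-- The cumulative distribution function of `X` under `P`. -/
noncomputable def cdfR {Ω : Type*} [MeasurableSpace Ω] (P : Measure Ω) (X : Ω → ℝ) (x : ℝ) : ℝ :=
  (P {ω | X ω ≤ x}).toReal

/-- Conditional expectation of `f` given the event `A`: `E[f | A]`. -/
noncomputable def condExpOn {Ω : Type*} [MeasurableSpace Ω] (P : Measure Ω) (f : Ω → ℝ)
    (A : Set Ω) : ℝ :=
  (∫ ω in A, f ω ∂P) / (P A).toReal

/-- The tail event `{X ≥ VaR_α(X)}`. -/
def tailEvent {Ω : Type*} [MeasurableSpace Ω] (P : Measure Ω) (X : Ω → ℝ) (α : ℝ) : Set Ω :=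
  {ω | VaR P X α ≤ X ω}

/-- Generalized inverse `U⁻¹(y) = inf {x | U(x) ≥ y}`. -/
noncomputable def ginv (U : ℝ → ℝ) (y : ℝ) : ℝ := sInf {x : ℝ | y ≤ U x}

/-- Tail Quasi-Linear Mean `ρ_U^α(X) = U⁻¹(E[U(X) | X ≥ VaR_α(X)])`. -/
noncomputable def TQLM {Ω : Type*} [MeasurableSpace Ω] (P : Measure Ω) (X : Ω → ℝ) (α : ℝ)
    (U : ℝ → ℝ) : ℝ :=
  ginv U (condExpOn P (fun ω => U (X ω)) (tailEvent P X α))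

/-- Conditional Tail Expectation `CTE_α(X) = E[X | X ≥ VaR_α(X)]`. -/
noncomputable def CTE {Ω : Type*} [MeasurableSpace Ω] (P : Measure Ω) (X : Ω → ℝ) (α : ℝ) : ℝ :=
  condExpOn P X (tailEvent P X α)

/-- Tail Conditional Entropic Risk Measure `ρ_γ^α(X) = (1/γ) log E[e^{γX} | X ≥ VaR_α(X)]`. -/
noncomputable def TCERM {Ω : Type*} [MeasurableSpace Ω] (P : Measure Ω) (X : Ω → ℝ) (α : ℝ)
    (γ : ℝ) : ℝ :=
  (1 / γ) * Real.log (condExpOn P (fun ω => Real.exp (γ * X ω)) (tailEvent P X α))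


/-! The distribution function of a random variable is right-continuous, so `VaR_α(X)` is the
least `x` with `F_X(x) ≥ α`. For `U` nondecreasing and continuous this gives
`VaR_α(U(X)) = U(VaR_α(X))`: the bound `F_{U(X)}(U(m)) ≥ F_X(m) ≥ α` is immediate, and any
`y < U(m)` lies below some `U(t)` with `t < m`, whence `F_{U(X)}(y) ≤ F_X(t) < α`. The two events
then agree because strict monotonicity of `U` just left of `m = VaR_α(X)` gives
`U(x) < U(m)` whenever `x < m`. -/

open Filter Topology ProbabilityTheory

lemma Monotone.map_le_map_iff_of_strictMonoOn_Ioo {U : ℝ → ℝ} {m ε : ℝ} (hU : Monotone U)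
    (hε : 0 < ε) (hSM : StrictMonoOn U (Ioo (m - ε) m)) (x : ℝ) : U m ≤ U x ↔ m ≤ x := by
  refine ⟨fun hmx => ?_, fun h => hU h⟩
  by_contra! hxm
  obtain ⟨t₁, hat₁, ht₁m⟩ := exists_between (max_lt hxm (sub_lt_self m hε))
  obtain ⟨t₂, ht₁₂, ht₂m⟩ := exists_between ht₁m
  have hUt : U t₁ < U t₂ :=
    hSM ⟨(le_max_right _ _).trans_lt hat₁, ht₁m⟩
      ⟨(le_max_right _ _).trans_lt (hat₁.trans ht₁₂), ht₂m⟩ ht₁₂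
  have hxt₁ : x ≤ t₁ := ((le_max_left _ _).trans_lt hat₁).le
  exact (hmx.trans (hU hxt₁)).not_gt (hUt.trans_le (hU ht₂m.le))

lemma VaR_eq_sInf_cdfR {Ω : Type*} [MeasurableSpace Ω] (P : Measure Ω) (X : Ω → ℝ) (α : ℝ) :
    VaR P X α = sInf {x | α ≤ cdfR P X x} := rfl

section VaR

variable {Ω : Type*} [MeasurableSpace Ω] (P : Measure Ω) [IsProbabilityMeasure P]
  {X : Ω → ℝ} {α : ℝ}

lemma cdfR_eq_cdf_map (hX : Measurable X) : cdfR P X = cdf (P.map X) := by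
  ext x
  have := Measure.isProbabilityMeasure_map (μ := P) hX.aemeasurable
  rw [cdf_eq_real, measureReal_def, Measure.map_apply hX measurableSet_Iic]
  rfl

lemma bddBelow_superlevel_cdfR (hX : Measurable X) (hα : 0 < α) :
    BddBelow {x | α ≤ cdfR P X x} := by
  rw [cdfR_eq_cdf_map P hX]
  obtain ⟨x₀, hx₀⟩ := ((tendsto_cdf_atBot (P.map X)).eventually (eventually_lt_nhds hα)).exists
  exact ⟨x₀, fun x hx => not_lt.1 fun hxx₀ => (hx.trans (monotone_cdf _ hxx₀.le)).not_gt hx₀⟩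

lemma nonempty_superlevel_cdfR (hX : Measurable X) (hα : α < 1) :
    {x | α ≤ cdfR P X x}.Nonempty := by
  rw [cdfR_eq_cdf_map P hX]
  exact ((tendsto_cdf_atTop (P.map X)).eventually (eventually_ge_nhds hα)).exists

lemma le_cdfR_VaR (hX : Measurable X) (hα : α < 1) : α ≤ cdfR P X (VaR P X α) := by
  have hne := nonempty_superlevel_cdfR P hX hα
  have hright : ∀ x > VaR P X α, α ≤ cdfR P X x := by
    intro x hx
    obtain ⟨s, hs, hsx⟩ := exists_lt_of_csInf_lt hne hx
    rw [cdfR_eq_cdf_map P hX] at hs ⊢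
    exact hs.trans (monotone_cdf _ hsx.le)
  have hcont : ContinuousWithinAt (cdfR P X) (Ioi (VaR P X α)) (VaR P X α) := by
    rw [cdfR_eq_cdf_map P hX]
    exact ((cdf (P.map X)).right_continuous _).mono Ioi_subset_Ici_self
  exact ge_of_tendsto hcont (eventually_nhdsWithin_of_forall hright)

lemma cdfR_lt_of_lt_VaR (hX : Measurable X) (hα : 0 < α) {t : ℝ} (ht : t < VaR P X α) :
    cdfR P X t < α := by
  rw [VaR_eq_sInf_cdfR] at ht
  by_contra! h
  exact notMem_of_lt_csInf ht (bddBelow_superlevel_cdfR P hX hα) h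

lemma VaR_comp_eq_of_monotone_of_continuous (hX : Measurable X) (hα : α ∈ Ioo 0 1)
    {U : ℝ → ℝ} (hU : Monotone U) (hUc : Continuous U) :
    VaR P (fun ω => U (X ω)) α = U (VaR P X α) := by
  set m := VaR P X α
  refine IsLeast.csInf_eq ⟨?_, fun y hy => ?_⟩
  · exact (le_cdfR_VaR P hX hα.2).trans (measureReal_mono fun ω (h : X ω ≤ m) => hU h)
  · by_contra! hym
    have hUt : ∀ᶠ t in 𝓝[<] m, y < U t :=
      ((hUc.tendsto m).mono_left nhdsWithin_le_nhds).eventually (eventually_gt_nhds hym)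
    obtain ⟨t, hyt, htm⟩ := (hUt.and self_mem_nhdsWithin).exists
    have hsub : {ω | U (X ω) ≤ y} ⊆ {ω | X ω ≤ t} := fun ω hω =>
      not_lt.1 fun htX => (hyt.trans_le (hU htX.le)).not_ge hω
    exact (hy.trans_lt ((measureReal_mono hsub).trans_lt (cdfR_lt_of_lt_VaR P hX hα.1 htm))).false

end VaR

theorem tailEvent_eq_tailEvent_comp_general
    {Ω : Type*} [MeasurableSpace Ω] (P : Measure Ω) [IsProbabilityMeasure P]
    (X : Ω → ℝ) (hX : Measurable X)
    (α : ℝ) (hα : α ∈ Set.Ioo (0:ℝ) 1)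
    (U : ℝ → ℝ) (hU : Monotone U) (hUc : Continuous U)
    (hA : ∃ ε > 0, StrictMonoOn U (Set.Ioo (VaR P X α - ε) (VaR P X α))) :
    {ω | VaR P X α ≤ X ω} = {ω | VaR P (fun ω => U (X ω)) α ≤ U (X ω)} := by
  obtain ⟨ε, hε, hSM⟩ := hA
  ext ω
  rw [mem_ofPred, mem_ofPred, VaR_comp_eq_of_monotone_of_continuous P hX hα hU hUc,
    hU.map_le_map_iff_of_strictMonoOn_Ioo hε hSM]

/-- Under Assumption (A), the events `{X ≥ VaR_α(X)}` and
`{U(X) ≥ VaR_α(U(X))}` coincide. -/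
theorem tailEvent_eq_tailEvent_comp
    {Ω : Type*} [MeasurableSpace Ω] (P : Measure Ω) [IsProbabilityMeasure P]
    (X : Ω → ℝ) (hX : Measurable X) (hFX : Continuous (cdfR P X))
    (α : ℝ) (hα : α ∈ Set.Ioo (0:ℝ) 1)
    (U : ℝ → ℝ) (hU : Monotone U) (hUc : Continuous U)
    (hA : ∃ ε > 0, StrictMonoOn U (Set.Ioo (VaR P X α - ε) (VaR P X α))) :
    {ω | VaR P X α ≤ X ω} = {ω | VaR P (fun ω => U (X ω)) α ≤ U (X ω)} :=
  tailEvent_eq_tailEvent_comp_general P X hX α hα U hU hUc hA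
end

section
/- Let X be an integrable real-valued random variable with continuous distribution function, α ∈ (0,1), and U : ℝ → ℝ increasing, continuous and convex with U(X) integrable, such that Assumption (A) holds. Then ρ_U^α(X) ≥ CTE_α(X). -/
/-!
On the tail event `X ≥ VaR_α(X)`, which has probability at least `1 - α > 0`, one has
`CTE_α(X) ≥ VaR_α(X)`, and Jensen's inequality gives `U(CTE_α(X)) ≤ E[U(X) | X ≥ VaR_α(X)]`.
A convex function has secant slopes increasing in both endpoints, so a single strict increase of
`U` just left of `VaR_α(X)` forces `U(b) < U(c)` whenever `b < c` and `c ≥ VaR_α(X)`, and makes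
`U` unbounded above. Hence every `b` with `U(b) ≥ E[U(X) | X ≥ VaR_α(X)]` satisfies
`b ≥ CTE_α(X)`, which is the claim about the generalized inverse.
-/

open MeasureTheory Real Set

open Filter Topology
open scoped ENNReal

section Quantile

variable {Ω : Type*} [MeasurableSpace Ω] {P : Measure Ω} {X : Ω → ℝ}

lemma exists_measure_le_lt [IsFiniteMeasure P] (hX : AEMeasurable X P) {a : ℝ≥0∞} (ha : 0 < a) :
    ∃ x, P {ω | X ω ≤ x} < a := by
  have hlim : Tendsto (fun n : ℕ => P {ω | X ω ≤ -n}) atTop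
      (𝓝 (P (⋂ n : ℕ, {ω | X ω ≤ -n}))) :=
    tendsto_measure_iInter_atTop (fun _ => hX.nullMeasurable measurableSet_Iic)
      (fun m n hmn ω (hω : X ω ≤ -n) => hω.trans (by simp [hmn])) ⟨0, measure_ne_top _ _⟩
  have hempty : (⋂ n : ℕ, {ω | X ω ≤ -n}) = ∅ := by
    ext ω
    simp only [mem_iInter, mem_ofPred_eq, mem_empty_iff_false, iff_false, not_forall, not_le]
    obtain ⟨n, hn⟩ := exists_nat_gt (-X ω)
    exact ⟨n, by linarith⟩
  rw [hempty, measure_empty] at hlim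
  obtain ⟨n, hn⟩ := (hlim.eventually (gt_mem_nhds ha)).exists
  exact ⟨-n, hn⟩

lemma measure_lt_le_of_forall_lt {v : ℝ} {a : ℝ≥0∞} (h : ∀ x < v, P {ω | X ω ≤ x} ≤ a) :
    P {ω | X ω < v} ≤ a := by
  have hunion : {ω | X ω < v} = ⋃ n : ℕ, {ω | X ω ≤ v - 1 / (n + 1)} := by
    ext ω
    simp only [mem_ofPred_eq, mem_iUnion]
    constructor
    · intro hω
      obtain ⟨n, hn⟩ := exists_nat_one_div_lt (sub_pos.2 hω)
      exact ⟨n, by linarith⟩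
    · rintro ⟨n, hn⟩
      linarith [Nat.one_div_pos_of_nat (α := ℝ) (n := n)]
  rw [hunion, Monotone.measure_iUnion]
  · exact iSup_le fun n => h _ (by linarith [Nat.one_div_pos_of_nat (α := ℝ) (n := n)])
  · intro m n hmn ω (hω : X ω ≤ v - 1 / (m + 1))
    exact hω.trans (by gcongr)

lemma bddBelow_VaR_set [IsFiniteMeasure P] (hX : AEMeasurable X P) {α : ℝ} (hα : 0 < α) :
    BddBelow {x : ℝ | α ≤ (P {ω | X ω ≤ x}).toReal} := by
  obtain ⟨x₀, hx₀⟩ := exists_measure_le_lt hX (ENNReal.ofReal_pos.2 hα)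
  refine ⟨x₀, fun x (hx : α ≤ _) => le_of_not_gt fun hxx₀ => ?_⟩
  have hmono : P {ω | X ω ≤ x} ≤ P {ω | X ω ≤ x₀} :=
    measure_mono fun ω (hω : X ω ≤ x) => hω.trans hxx₀.le
  exact ((ENNReal.ofReal_le_of_le_toReal hx).trans hmono).not_gt hx₀

lemma measure_lt_VaR_le [IsFiniteMeasure P] (hX : AEMeasurable X P) {α : ℝ} (hα : 0 < α) :
    P {ω | X ω < VaR P X α} ≤ ENNReal.ofReal α :=
  measure_lt_le_of_forall_lt fun x hx => by
    have hnot : ¬ α ≤ (P {ω | X ω ≤ x}).toReal := fun hmem =>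
      (csInf_le (bddBelow_VaR_set hX hα) hmem).not_gt hx
    exact (ENNReal.le_ofReal_iff_toReal_le (measure_ne_top _ _) hα.le).2 (not_le.1 hnot).le

lemma measure_tailEvent_ne_zero [IsProbabilityMeasure P] (hX : AEMeasurable X P) {α : ℝ}
    (hα : α ∈ Ioo (0 : ℝ) 1) : P (tailEvent P X α) ≠ 0 := by
  intro h0
  have hcompl : (tailEvent P X α)ᶜ = {ω | X ω < VaR P X α} := by
    ext ω
    simp [tailEvent]
  have hle : (1 : ℝ≥0∞) ≤ ENNReal.ofReal α :=
    calc (1 : ℝ≥0∞) = P (tailEvent P X α ∪ (tailEvent P X α)ᶜ) := by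
          rw [union_compl_self, measure_univ]
      _ ≤ P (tailEvent P X α) + P (tailEvent P X α)ᶜ := measure_union_le _ _
      _ ≤ ENNReal.ofReal α := by
          rw [h0, zero_add, hcompl]
          exact measure_lt_VaR_le hX hα.1
  exact (ENNReal.ofReal_lt_one.2 hα.2).not_ge hle

lemma condExpOn_eq_setAverage (f : Ω → ℝ) (A : Set Ω) :
    condExpOn P f A = ⨍ ω in A, f ω ∂P := by
  rw [condExpOn, setAverage_eq, smul_eq_mul, measureReal_def, div_eq_inv_mul]

lemma le_condExpOn [IsFiniteMeasure P] {f : Ω → ℝ} {A : Set Ω} {c : ℝ} (hA : P A ≠ 0)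
    (hf : IntegrableOn f A P) (hc : ∀ᵐ ω ∂P.restrict A, c ≤ f ω) : c ≤ condExpOn P f A := by
  have hPA : 0 < (P A).toReal := ENNReal.toReal_pos hA (measure_ne_top _ _)
  rw [condExpOn, le_div_iff₀ hPA]
  calc c * (P A).toReal = ∫ _ in A, c ∂P := by
        rw [setIntegral_const, smul_eq_mul, measureReal_def, mul_comm]
    _ ≤ ∫ ω in A, f ω ∂P := integral_mono_ae (integrable_const c) hf hc

lemma ConvexOn.map_condExpOn_le [IsFiniteMeasure P] {U : ℝ → ℝ} (hU : ConvexOn ℝ univ U)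
    {f : Ω → ℝ} {A : Set Ω} (hA : P A ≠ 0) (hf : IntegrableOn f A P)
    (hUf : IntegrableOn (fun ω => U (f ω)) A P) :
    U (condExpOn P f A) ≤ condExpOn P (fun ω => U (f ω)) A := by
  simpa only [condExpOn_eq_setAverage] using
    hU.map_set_average_le (hU.continuousOn isOpen_univ) isClosed_univ hA (measure_ne_top _ _)
      (ae_of_all _ fun _ => mem_univ _) hf hUf

lemma VaR_le_CTE [IsProbabilityMeasure P] (hX : Integrable X P) {α : ℝ}
    (hα : α ∈ Ioo (0 : ℝ) 1) : VaR P X α ≤ CTE P X α :=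
  le_condExpOn (measure_tailEvent_ne_zero hX.aemeasurable hα) hX.integrableOn
    (ae_restrict_mem₀ (hX.aemeasurable.nullMeasurable measurableSet_Ici))

end Quantile

section ConvexIncreasing

variable {U : ℝ → ℝ} {p q : ℝ}

lemma Monotone.map_lt_map_of_convexOn (hU : Monotone U) (hconv : ConvexOn ℝ univ U)
    (hpq : p < q) (hUpq : U p < U q) {b c : ℝ} (hqc : q ≤ c) (hbc : b < c) : U b < U c := by
  have hpc : p < c := hpq.trans_le hqc
  have hb'c : max b p < c := max_lt hbc hpc
  have hslope : 0 < slope U c (max b p) :=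
    calc 0 < slope U p q := (slope_pos_iff hpq).2 hUpq
      _ ≤ slope U p c :=
        hconv.slope_mono (mem_univ p) ⟨mem_univ q, hpq.ne'⟩ ⟨mem_univ c, hpc.ne'⟩ hqc
      _ = slope U c p := slope_comm _ _ _
      _ ≤ slope U c (max b p) :=
        hconv.slope_mono (mem_univ c) ⟨mem_univ p, hpc.ne⟩ ⟨mem_univ _, hb'c.ne⟩
          (le_max_right b p)
  exact (hU (le_max_left b p)).trans_lt ((slope_pos_iff_gt hb'c).1 hslope)

lemma ConvexOn.tendsto_atTop_of_lt (hconv : ConvexOn ℝ univ U) (hpq : p < q)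
    (hUpq : U p < U q) : Tendsto U atTop atTop := by
  have hs : 0 < slope U p q := (slope_pos_iff hpq).2 hUpq
  have hline : Tendsto (fun x => slope U p q * (x - p) + U p) atTop atTop :=
    tendsto_atTop_add_const_right _ _
      (Tendsto.const_mul_atTop hs (tendsto_atTop_add_const_right _ _ tendsto_id))
  refine tendsto_atTop_mono' _ ?_ hline
  filter_upwards [eventually_ge_atTop q] with x hqx
  have hpx : p < x := hpq.trans_le hqx
  have hle : slope U p q ≤ slope U p x :=
    hconv.slope_mono (mem_univ p) ⟨mem_univ q, hpq.ne'⟩ ⟨mem_univ x, hpx.ne'⟩ hqx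
  rw [slope_def_field U p x, le_div_iff₀ (sub_pos.2 hpx)] at hle
  linarith

end ConvexIncreasing

lemma le_ginv {U : ℝ → ℝ} {y c : ℝ} (hne : ∃ x, y ≤ U x) (h : ∀ b < c, U b < y) :
    c ≤ ginv U y :=
  le_csInf hne fun b hb => le_of_not_gt fun hbc => (h b hbc).not_ge hb

theorem CTE_le_TQLM_of_convex_general
    {Ω : Type*} [MeasurableSpace Ω] (P : Measure Ω) [IsProbabilityMeasure P]
    (X : Ω → ℝ) (hXint : Integrable X P)
    (α : ℝ) (hα : α ∈ Set.Ioo (0:ℝ) 1)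
    (U : ℝ → ℝ) (hU : Monotone U)
    (hUconv : ConvexOn ℝ Set.univ U)
    (hUXint : Integrable (fun ω => U (X ω)) P)
    (hA : ∃ ε > 0, StrictMonoOn U (Set.Ioo (VaR P X α - ε) (VaR P X α))) :
    CTE P X α ≤ TQLM P X α U := by
  obtain ⟨ε, hε, hstrict⟩ := hA
  have hVaR := VaR_le_CTE hXint hα
  set v := VaR P X α
  have hUpq : U (v - ε / 2) < U (v - ε / 3) :=
    hstrict ⟨by linarith, by linarith⟩ ⟨by linarith, by linarith⟩ (by linarith)
  have hJensen : U (CTE P X α) ≤ condExpOn P (fun ω => U (X ω)) (tailEvent P X α) :=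
    hUconv.map_condExpOn_le (measure_tailEvent_ne_zero hXint.aemeasurable hα)
      hXint.integrableOn hUXint.integrableOn
  refine le_ginv ((hUconv.tendsto_atTop_of_lt (by linarith) hUpq).eventually_ge_atTop _).exists
    fun b hb => ?_
  exact (hU.map_lt_map_of_convexOn hUconv (by linarith) hUpq (by linarith) hb).trans_le hJensen

/-- For convex increasing `U` satisfying Assumption (A),
`ρ_U^α(X) ≥ CTE_α(X)`. -/
theorem CTE_le_TQLM_of_convex
    {Ω : Type*} [MeasurableSpace Ω] (P : Measure Ω) [IsProbabilityMeasure P]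
    (X : Ω → ℝ) (hX : Measurable X) (hXint : Integrable X P)
    (hFX : Continuous (cdfR P X))
    (α : ℝ) (hα : α ∈ Set.Ioo (0:ℝ) 1)
    (U : ℝ → ℝ) (hU : Monotone U) (hUc : Continuous U)
    (hUconv : ConvexOn ℝ Set.univ U)
    (hUXint : Integrable (fun ω => U (X ω)) P)
    (hA : ∃ ε > 0, StrictMonoOn U (Set.Ioo (VaR P X α - ε) (VaR P X α))) :
    CTE P X α ≤ TQLM P X α U :=
  CTE_le_TQLM_of_convex_general P X hXint α hα U hU hUconv hUXint hA
end

section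
/- Let γ > 0, α ∈ (0,1), and let X_1,…,X_n be pairwise comonotone random variables, say X_i = f_i(V) with f_i increasing and left-continuous and V uniformly distributed on (0,1), such that S = X_1 + ⋯ + X_n has a continuous distribution function and all relevant exponential moments are finite. Then ρ_γ^α(S) ≥ Σ_{i=1}^n ρ_γ^α(X_i | S). -/
open MeasureTheory Real Set

/-!
Conditionally on an event `A`, the factors `e^{γ X_i} = e^{γ f_i(V)}` of `e^{γ S}` are nonnegative
increasing functions of the single variable `V`. For two such functions `u, v` Chebyshev's
association inequality `E[u] E[v] ≤ E[u v]` follows by integrating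
`(u x - u y) (v x - v y) ≥ 0` against `μ ⊗ μ`; iterating it over the factors gives
`∏ E[e^{γ X_i} | A] ≤ E[e^{γ S} | A]`, and taking `(1/γ) log` gives the claim.
-/

open ProbabilityTheory Finset

section Comonotone

variable {Ω ι : Type*} [MeasurableSpace Ω] {μ : Measure Ω}

theorem integral_mul_integral_le_integral_mul_of_monovary [IsProbabilityMeasure μ]
    {u v : Ω → ℝ} (huv : Monovary u v) (hu : Integrable u μ) (hv : Integrable v μ)
    (huv' : Integrable (fun ω => u ω * v ω) μ) :
    (∫ ω, u ω ∂μ) * ∫ ω, v ω ∂μ ≤ ∫ ω, u ω * v ω ∂μ := by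
  have hle : ∫ z, (u z.1 * v z.2 + v z.1 * u z.2) ∂μ.prod μ
      ≤ ∫ z, (u z.1 * v z.1 + u z.2 * v z.2) ∂μ.prod μ :=
    integral_mono ((hu.mul_prod hv).add (hv.mul_prod hu))
      ((huv'.comp_fst μ).add (huv'.comp_snd μ)) fun z => by
        linarith [huv.mul_add_mul_le_mul_add_mul z.1 z.2]
  rw [integral_add (hu.mul_prod hv) (hv.mul_prod hu), integral_add (huv'.comp_fst μ)
    (huv'.comp_snd μ), integral_prod_mul, integral_prod_mul, integral_fun_fst (fun ω => u ω * v ω),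
    integral_fun_snd (fun ω => u ω * v ω)] at hle
  simp only [probReal_univ, one_smul] at hle
  linarith

theorem prod_integral_le_integral_prod_of_monotone {α : Type*} [LinearOrder α]
    [IsProbabilityMeasure μ] {W : Ω → α} {g : ι → α → ℝ} (hg : ∀ i, Monotone (g i))
    (hg₀ : ∀ i x, 0 ≤ g i x) (s : Finset ι)
    (hint : ∀ t ⊆ s, Integrable (fun ω => ∏ i ∈ t, g i (W ω)) μ) :
    ∏ i ∈ s, ∫ ω, g i (W ω) ∂μ ≤ ∫ ω, ∏ i ∈ s, g i (W ω) ∂μ := by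
  classical
  induction s using Finset.induction with
  | empty => simp
  | insert a t ha ih =>
    have hint_t : ∀ t' ⊆ t, Integrable (fun ω => ∏ i ∈ t', g i (W ω)) μ :=
      fun t' ht' => hint t' (ht'.trans (subset_insert a t))
    have hprod_mono : Monotone fun x => ∏ i ∈ t, g i x :=
      fun x y hxy => prod_le_prod (fun i _ => hg₀ i x) fun i _ => hg i hxy
    have hchebyshev := integral_mul_integral_le_integral_mul_of_monovary
      (μ := μ) (((hg a).monovary hprod_mono).comp_right W)
      (by simpa [Function.comp_def] using hint {a} (by simp)) (hint_t t le_rfl)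
      (by simpa [prod_insert ha] using hint _ le_rfl)
    simp only [prod_insert ha]
    calc (∫ ω, g a (W ω) ∂μ) * ∏ i ∈ t, ∫ ω, g i (W ω) ∂μ
        ≤ (∫ ω, g a (W ω) ∂μ) * ∫ ω, ∏ i ∈ t, g i (W ω) ∂μ :=
          mul_le_mul_of_nonneg_left (ih hint_t) (integral_nonneg fun ω => hg₀ a (W ω))
      _ ≤ ∫ ω, g a (W ω) * ∏ i ∈ t, g i (W ω) ∂μ := hchebyshev

theorem integrable_prod_of_subset_of_monotone [IsFiniteMeasure μ] {W : Ω → ℝ}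
    (hW : Measurable W) {g : ι → ℝ → ℝ} (hg : ∀ i, Monotone (g i)) (hg₀ : ∀ i x, 0 < g i x)
    {s t : Finset ι} (hts : t ⊆ s) (hint : Integrable (fun ω => ∏ i ∈ s, g i (W ω)) μ) :
    Integrable (fun ω => ∏ i ∈ t, g i (W ω)) μ := by
  classical
  set C := ∏ i ∈ t, g i 0
  set D := ∏ i ∈ s \ t, g i 0
  have hD : 0 < D := prod_pos fun i _ => hg₀ i 0
  -- Below `0` the partial product is at most its value at `0`; above `0` the missing
  -- factors of the full product are at least their values at `0`.
  have hbound : ∀ x, ∏ i ∈ t, g i x ≤ C + D⁻¹ * ∏ i ∈ s, g i x := by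
    intro x
    have hC : 0 ≤ C := prod_nonneg fun i _ => (hg₀ i 0).le
    have hs : 0 ≤ D⁻¹ * ∏ i ∈ s, g i x :=
      mul_nonneg (inv_nonneg.2 hD.le) (prod_nonneg fun i _ => (hg₀ i x).le)
    rcases le_total x 0 with hx | hx
    · linarith [prod_le_prod (s := t) (fun i _ => (hg₀ i x).le) fun i _ => hg i hx]
    · have hsplit : D * ∏ i ∈ t, g i x ≤ ∏ i ∈ s, g i x := by
        rw [← prod_sdiff hts]
        exact mul_le_mul_of_nonneg_right
          (prod_le_prod (fun i _ => (hg₀ i 0).le) fun i _ => hg i hx)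
          (prod_nonneg fun i _ => (hg₀ i x).le)
      linarith [(le_inv_mul_iff₀ hD).2 hsplit]
  refine ((integrable_const C).add (hint.const_mul D⁻¹)).mono' ?_ (ae_of_all _ fun ω => ?_)
  · exact (Finset.measurable_prod t fun i _ => (hg i).measurable.comp hW).aestronglyMeasurable
  · rw [norm_of_nonneg (prod_nonneg fun i _ => (hg₀ i (W ω)).le)]
    exact hbound (W ω)

theorem sum_log_integral_exp_le_log_integral_exp_sum [Fintype ι] [IsProbabilityMeasure μ]
    {V : Ω → ℝ} (hV : Measurable V) {f : ι → ℝ → ℝ} (hf : ∀ i, Monotone (f i)) {γ : ℝ}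
    (hγ : 0 ≤ γ) (hint : Integrable (fun ω => exp (γ * ∑ i, f i (V ω))) μ) :
    ∑ i, log (∫ ω, exp (γ * f i (V ω)) ∂μ) ≤ log (∫ ω, exp (γ * ∑ i, f i (V ω)) ∂μ) := by
  set g : ι → ℝ → ℝ := fun i x => exp (γ * f i x)
  have hg : ∀ i, Monotone (g i) := fun i x y hxy =>
    exp_le_exp.2 (mul_le_mul_of_nonneg_left (hf i hxy) hγ)
  have hexp_sum : ∀ ω, exp (γ * ∑ i, f i (V ω)) = ∏ i, g i (V ω) := fun ω => by
    rw [mul_sum, exp_sum]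
  simp only [hexp_sum] at hint ⊢
  have hint_sub : ∀ t ⊆ (univ : Finset ι), Integrable (fun ω => ∏ i ∈ t, g i (V ω)) μ :=
    fun t ht => integrable_prod_of_subset_of_monotone hV hg (fun i x => exp_pos _) ht hint
  have hpos : ∀ i, 0 < ∫ ω, g i (V ω) ∂μ := fun i =>
    integral_exp_pos (by simpa using hint_sub {i} (subset_univ _))
  rw [← log_prod fun i _ => (hpos i).ne']
  exact log_le_log (prod_pos fun i _ => hpos i)
    (prod_integral_le_integral_prod_of_monotone hg (fun i x => (exp_pos _).le) univ hint_sub)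

end Comonotone

theorem condExpOn_eq_integral_cond {Ω : Type*} [MeasurableSpace Ω] (P : Measure Ω)
    (φ : Ω → ℝ) (A : Set Ω) : condExpOn P φ A = ∫ ω, φ ω ∂P[|A] := by
  rw [ProbabilityTheory.cond, integral_smul_measure, ENNReal.toReal_inv, smul_eq_mul, condExpOn,
    div_eq_inv_mul]

theorem sum_log_condExpOn_exp_le_log_condExpOn_exp_sum {Ω ι : Type*} [MeasurableSpace Ω]
    [Fintype ι] (P : Measure Ω) [IsFiniteMeasure P] (A : Set Ω)
    {V : Ω → ℝ} (hV : Measurable V) {f : ι → ℝ → ℝ} (hf : ∀ i, Monotone (f i)) {γ : ℝ}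
    (hγ : 0 ≤ γ) (hint : Integrable (fun ω => exp (γ * ∑ i, f i (V ω))) P) :
    ∑ i, log (condExpOn P (fun ω => exp (γ * f i (V ω))) A)
      ≤ log (condExpOn P (fun ω => exp (γ * ∑ i, f i (V ω))) A) := by
  simp only [condExpOn_eq_integral_cond]
  by_cases hA : P A = 0
  -- `P[|A] = 0`, so every integral is `0` and both sides are `log 0 = 0`.
  · simp [cond_eq_zero_of_meas_eq_zero hA]
  have := cond_isProbabilityMeasure (μ := P) hA
  exact sum_log_integral_exp_le_log_integral_exp_sum hV hf hγ
    ((hint.restrict).smul_measure (ENNReal.inv_ne_top.2 hA))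

theorem TCERM_superadditive_comonotone_general
    {Ω : Type*} [MeasurableSpace Ω] (P : Measure Ω) [IsProbabilityMeasure P]
    (γ : ℝ) (hγ : 0 < γ) (α : ℝ)
    (n : ℕ) (V : Ω → ℝ) (hV : Measurable V)
    (f : Fin n → ℝ → ℝ) (hf : ∀ i, Monotone (f i))
    (X : Fin n → Ω → ℝ) (hXdef : ∀ i, X i = fun ω => f i (V ω))
    (S : Ω → ℝ) (hS : S = fun ω => ∑ i, X i ω)
    (hintS : Integrable (fun ω => Real.exp (γ * S ω)) P) :
    ∑ i, (1 / γ) * Real.log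
        (condExpOn P (fun ω => Real.exp (γ * X i ω)) (tailEvent P S α))
      ≤ TCERM P S α γ := by
  obtain rfl : X = fun i ω => f i (V ω) := funext hXdef
  subst hS
  rw [TCERM, ← mul_sum]
  exact mul_le_mul_of_nonneg_left
    (sum_log_condExpOn_exp_le_log_condExpOn_exp_sum P _ hV hf hγ.le hintS) (by positivity)

/-- For `γ > 0` and pairwise comonotone `X_i = f_i(V)`,
`ρ_γ^α(S) ≥ ∑ i, ρ_γ^α(X_i | S)` where `S = X_1 + ⋯ + X_n`. -/
theorem TCERM_superadditive_comonotone
    {Ω : Type*} [MeasurableSpace Ω] (P : Measure Ω) [IsProbabilityMeasure P]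
    (γ : ℝ) (hγ : 0 < γ) (α : ℝ) (hα : α ∈ Set.Ioo (0:ℝ) 1)
    (n : ℕ) (V : Ω → ℝ) (hV : Measurable V)
    (hunif : P.map V = volume.restrict (Set.Ioo (0:ℝ) 1))
    (f : Fin n → ℝ → ℝ) (hf : ∀ i, Monotone (f i))
    (hflc : ∀ i, ∀ x : ℝ, ContinuousWithinAt (f i) (Set.Iio x) x)
    (X : Fin n → Ω → ℝ) (hXdef : ∀ i, X i = fun ω => f i (V ω))
    (S : Ω → ℝ) (hS : S = fun ω => ∑ i, X i ω)
    (hFS : Continuous (cdfR P S))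
    (hintS : Integrable (fun ω => Real.exp (γ * S ω)) P)
    (hintX : ∀ i, Integrable (fun ω => Real.exp (γ * X i ω)) P) :
    ∑ i, (1 / γ) * Real.log
        (condExpOn P (fun ω => Real.exp (γ * X i ω)) (tailEvent P S α))
      ≤ TCERM P S α γ :=
  TCERM_superadditive_comonotone_general P γ hγ α n V hV f hf X hXdef S hS hintS
end

section
/- Let γ > 0, α ∈ (0,1), and let X, Y be countermonotone random variables, say X = f(Z) and Y = g(Z) with f increasing and g decreasing, such that S = X + Y has a continuous distribution function and all relevant exponential moments are finite. Then ρ_γ^α(S) ≤ ρ_γ^α(X | S) + ρ_γ^α(Y | S). -/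
open MeasureTheory Real Set

/-!
Countermonotonicity makes `e^{γX}` and `e^{γY}` antivary, so Chebyshev's integral inequality on
the tail event `A` gives `E[e^{γX} e^{γY} | A] ≤ E[e^{γX} | A] E[e^{γY} | A]`. Since
`e^{γS} = e^{γX} e^{γY}`, taking logarithms and multiplying by `1 / γ > 0` yields the claim.
-/

theorem Antivary.comp_monotone_right {ι α β β' : Type*} [Preorder α] [LinearOrder β] [Preorder β']
    {f : ι → α} {g : ι → β} {ψ : β → β'} (h : Antivary f g) (hψ : Monotone ψ) :
    Antivary f (ψ ∘ g) :=
  fun _ _ hij => h <| lt_of_not_ge fun hji => hij.not_ge (hψ hji)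

section

variable {Ω : Type*} [MeasurableSpace Ω] {μ P : Measure Ω} {A : Set Ω}

theorem Antivary.measureReal_mul_integral_mul_le_integral_mul_integral [IsFiniteMeasure μ]
    {u v : Ω → ℝ} (h : Antivary u v) (hu : Integrable u μ) (hv : Integrable v μ)
    (huv : Integrable (fun ω => u ω * v ω) μ) :
    μ.real univ * ∫ ω, u ω * v ω ∂μ ≤ (∫ ω, u ω ∂μ) * ∫ ω, v ω ∂μ := by
  have h1 : Integrable (fun _ : Ω => (1 : ℝ)) μ := integrable_const 1
  have hdiag₁ := huv.mul_prod h1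
  have hdiag₂ := h1.mul_prod huv
  have hcross₁ := hu.mul_prod hv
  have hcross₂ := hv.mul_prod hu
  -- integrate `(u x - u y) * (v x - v y) ≤ 0` against `μ ⊗ μ`
  have key : ∫ p : Ω × Ω, (u p.1 * v p.1 * 1 + 1 * (u p.2 * v p.2)) -
      (u p.1 * v p.2 + v p.1 * u p.2) ∂μ.prod μ ≤ 0 :=
    integral_nonpos fun p => calc
      _ = (u p.1 - u p.2) * (v p.1 - v p.2) := by ring
      _ ≤ 0 := h.sub_mul_sub_nonpos p.2 p.1
  have hsub := integral_sub (hdiag₁.add hdiag₂) (hcross₁.add hcross₂)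
  simp only [Pi.add_apply] at hsub
  rw [hsub, integral_add hdiag₁ hdiag₂, integral_add hcross₁ hcross₂, integral_prod_mul,
    integral_prod_mul, integral_prod_mul (fun ω => u ω * v ω) (fun _ => (1 : ℝ)),
    integral_prod_mul (fun _ => (1 : ℝ)) (fun ω => u ω * v ω), integral_const, smul_eq_mul,
    mul_one] at key
  linarith

theorem condExpOn_mul_le_of_antivary [IsFiniteMeasure P] {u v : Ω → ℝ} (h : Antivary u v)
    (hu : IntegrableOn u A P) (hv : IntegrableOn v A P)
    (huv : IntegrableOn (fun ω => u ω * v ω) A P) :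
    condExpOn P (fun ω => u ω * v ω) A ≤ condExpOn P u A * condExpOn P v A := by
  have hcheb :=
    h.measureReal_mul_integral_mul_le_integral_mul_integral (μ := P.restrict A) hu hv huv
  rw [measureReal_restrict_apply_univ] at hcheb
  rw [condExpOn, condExpOn, condExpOn, div_mul_div_comm, ← measureReal_def]
  rcases eq_or_ne (P.real A) 0 with hA | hA
  · simp [hA]
  rw [← mul_div_mul_left _ _ hA]
  exact div_le_div_of_nonneg_right hcheb (mul_self_nonneg _)

theorem condExpOn_pos [IsFiniteMeasure P] {f : Ω → ℝ} (hf : ∀ ω, 0 < f ω)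
    (hint : IntegrableOn f A P) (hA : P A ≠ 0) :
    0 < condExpOn P f A := by
  refine div_pos ?_ (ENNReal.toReal_pos hA (measure_ne_top P A))
  rw [setIntegral_pos_iff_support_of_nonneg_ae (.of_forall fun ω => (hf ω).le) hint,
    Function.support_eq_univ fun ω => (hf ω).ne', univ_inter]
  exact pos_iff_ne_zero.mpr hA

/-- `ρ_γ^α(X | S)` is `condEntropicRisk P X (tailEvent P S α) γ`. -/
noncomputable def condEntropicRisk (P : Measure Ω) (X : Ω → ℝ) (A : Set Ω) (γ : ℝ) : ℝ :=
  (1 / γ) * Real.log (condExpOn P (fun ω => Real.exp (γ * X ω)) A)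

theorem condEntropicRisk_add_le_of_antivary [IsFiniteMeasure P] {X Y : Ω → ℝ} {γ : ℝ}
    (hγ : 0 ≤ γ) (hXY : Antivary X Y)
    (hX : IntegrableOn (fun ω => Real.exp (γ * X ω)) A P)
    (hY : IntegrableOn (fun ω => Real.exp (γ * Y ω)) A P)
    (hS : IntegrableOn (fun ω => Real.exp (γ * (X ω + Y ω))) A P) :
    condEntropicRisk P (fun ω => X ω + Y ω) A γ ≤
      condEntropicRisk P X A γ + condEntropicRisk P Y A γ := by
  rw [condEntropicRisk, condEntropicRisk, condEntropicRisk, ← mul_add]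
  refine mul_le_mul_of_nonneg_left ?_ (by positivity)
  rcases eq_or_ne (P A) 0 with hA | hA
  · -- junk values: every term is `log 0 = 0`
    simp [condExpOn, hA]
  have hexp : Monotone fun x => Real.exp (γ * x) :=
    Real.exp_monotone.comp (monotone_mul_left_of_nonneg hγ)
  have hanti : Antivary (fun ω => Real.exp (γ * X ω)) (fun ω => Real.exp (γ * Y ω)) :=
    (hXY.comp_monotone_right hexp).comp_monotone_left hexp
  simp only [mul_add, Real.exp_add] at hS ⊢
  rw [← Real.log_mul (condExpOn_pos (fun _ => Real.exp_pos _) hX hA).ne'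
    (condExpOn_pos (fun _ => Real.exp_pos _) hY hA).ne']
  exact Real.log_le_log (condExpOn_pos (fun _ => by positivity) hS hA)
    (condExpOn_mul_le_of_antivary hanti hX hY hS)

end

theorem TCERM_subadditive_countermonotone_general
    {Ω : Type*} [MeasurableSpace Ω] (P : Measure Ω) [IsProbabilityMeasure P]
    (γ : ℝ) (hγ : 0 < γ) (α : ℝ)
    (Z : Ω → ℝ)
    (f g : ℝ → ℝ) (hf : Monotone f) (hg : Antitone g)
    (X Y : Ω → ℝ) (hXdef : X = fun ω => f (Z ω)) (hYdef : Y = fun ω => g (Z ω))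
    (S : Ω → ℝ) (hS : S = fun ω => X ω + Y ω)
    (hintS : Integrable (fun ω => Real.exp (γ * S ω)) P)
    (hintX : Integrable (fun ω => Real.exp (γ * X ω)) P)
    (hintY : Integrable (fun ω => Real.exp (γ * Y ω)) P) :
    TCERM P S α γ ≤
      (1 / γ) * Real.log (condExpOn P (fun ω => Real.exp (γ * X ω)) (tailEvent P S α)) +
      (1 / γ) * Real.log (condExpOn P (fun ω => Real.exp (γ * Y ω)) (tailEvent P S α)) := by
  have hXY : Antivary X Y := hXdef ▸ hYdef ▸ (hf.antivary hg).comp_right Z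
  subst hS
  exact condEntropicRisk_add_le_of_antivary hγ.le hXY hintX.integrableOn hintY.integrableOn
    hintS.integrableOn

/-- For `γ > 0` and countermonotone `X = f(Z)`, `Y = g(Z)`
(`f` increasing, `g` decreasing), `ρ_γ^α(S) ≤ ρ_γ^α(X | S) + ρ_γ^α(Y | S)`
where `S = X + Y`. -/
theorem TCERM_subadditive_countermonotone
    {Ω : Type*} [MeasurableSpace Ω] (P : Measure Ω) [IsProbabilityMeasure P]
    (γ : ℝ) (hγ : 0 < γ) (α : ℝ) (hα : α ∈ Set.Ioo (0:ℝ) 1)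
    (Z : Ω → ℝ) (hZ : Measurable Z)
    (f g : ℝ → ℝ) (hf : Monotone f) (hg : Antitone g)
    (X Y : Ω → ℝ) (hXdef : X = fun ω => f (Z ω)) (hYdef : Y = fun ω => g (Z ω))
    (S : Ω → ℝ) (hS : S = fun ω => X ω + Y ω)
    (hFS : Continuous (cdfR P S))
    (hintS : Integrable (fun ω => Real.exp (γ * S ω)) P)
    (hintX : Integrable (fun ω => Real.exp (γ * X ω)) P)
    (hintY : Integrable (fun ω => Real.exp (γ * Y ω)) P) :
    TCERM P S α γ ≤
      (1 / γ) * Real.log (condExpOn P (fun ω => Real.exp (γ * X ω)) (tailEvent P S α)) +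
      (1 / γ) * Real.log (condExpOn P (fun ω => Real.exp (γ * Y ω)) (tailEvent P S α)) :=
  TCERM_subadditive_countermonotone_general P γ hγ α Z f g hf hg X Y hXdef hYdef S hS hintS hintX
    hintY
end
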